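/- arXiv:1906.11743 — 3 statements merged into one kernel-verified Lean document; each statement's English description precedes it below -/
import Mathlib

section
/- Let p ∈ (0,1) and let t ≥ 2 be an integer. Let n ≥ 2 be an integer such that a_p(n) ≥ 1, t·a_p(n) ≤ n, and L(n)·ln n > 1, and let m₁, m₂ be nonnegative integers with a_p(n) − 1 < m₁ + m₂/t ≤ a_p(n) and with (1−p)^{a_p(n)−m₁} < 1/t. Then n!/((n−m₁−m₂)!·m₁!·m₂!) · (1 − (1−p)^{m₁})^{n−m₁−m₂} < exp[ t·( 2·L(n) − L(L(n)·ln n)·ln n ) ]. -/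
/-!
With `k = m₁ + m₂` and `q = (1-p)^{m₁}`, the trinomial coefficient is at most `n^k` and
`(1 - q)^{n-k} ≤ e^{-q(n-k)}`, so the left side is at most `exp (k ln n - q (n - k))`.
Since `(1-p)^{a_p(n)} = L(n) ln n / n`, the hypothesis on `m₁` says `q n > t L(n) ln n`, and
`a_p(n) = L(n) - L(L(n) ln n)`. Hence, using `q ≤ 1` and `k ≤ t a_p(n) < t L(n)`,
`k ln n - q (n - k) < t a_p(n) ln n - t L(n) ln n + t L(n) = t (L(n) - L(L(n) ln n) ln n)`,
which is even smaller than the claimed exponent.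
-/

/-- `L(x) = log_{1/(1-p)} x`. -/
noncomputable def Lp (p : ℝ) (x : ℝ) : ℝ := Real.logb (1 / (1 - p)) x

/-- `a_p(n) = log_{1/(1-p)} ( n / (log_{1/(1-p)} n · ln n) )`. -/
noncomputable def apn (p : ℝ) (n : ℕ) : ℝ :=
  Real.logb (1 / (1 - p)) ((n : ℝ) / (Real.logb (1 / (1 - p)) n * Real.log n))

open Real
open scoped Nat

lemma factorial_div_factorial_mul_factorial_le_pow {n m₁ m₂ : ℕ} (h : m₁ + m₂ ≤ n) :
    (n ! : ℝ) / ((n - m₁ - m₂)! * m₁ ! * m₂ !) ≤ (n : ℝ) ^ (m₁ + m₂) := by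
  rw [div_le_iff₀ (by positivity), Nat.sub_sub]
  exact_mod_cast calc
    n ! = (n - (m₁ + m₂))! * n.descFactorial (m₁ + m₂) := (Nat.factorial_mul_descFactorial h).symm
    _ ≤ (n - (m₁ + m₂))! * n ^ (m₁ + m₂) := Nat.mul_le_mul_left _ (Nat.descFactorial_le_pow _ _)
    _ ≤ n ^ (m₁ + m₂) * ((n - (m₁ + m₂))! * m₁ ! * m₂ !) := by
      rw [mul_comm, mul_assoc]
      exact Nat.mul_le_mul_left _ (Nat.le_mul_of_pos_right _ (by positivity))

lemma one_sub_pow_le_exp_neg_mul {q : ℝ} (hq : q ≤ 1) (m : ℕ) :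
    (1 - q) ^ m ≤ exp (-(q * m)) :=
  calc (1 - q) ^ m ≤ exp (-q) ^ m := pow_le_pow_left₀ (by linarith) (one_sub_le_exp_neg q) m
    _ = exp (-(q * m)) := by rw [← exp_nat_mul]; ring_nf

lemma factorial_div_mul_one_sub_pow_le_exp {n m₁ m₂ : ℕ} (hn : 0 < n) (h : m₁ + m₂ ≤ n)
    {q : ℝ} (hq : q ≤ 1) :
    (n ! : ℝ) / ((n - m₁ - m₂)! * m₁ ! * m₂ !) * (1 - q) ^ (n - m₁ - m₂) ≤
      exp ((m₁ + m₂) * log n - q * (n - (m₁ + m₂))) := by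
  have hcast : ((n - m₁ - m₂ : ℕ) : ℝ) = n - (m₁ + m₂) := by
    rw [Nat.sub_sub, Nat.cast_sub h, Nat.cast_add]
  calc (n ! : ℝ) / ((n - m₁ - m₂)! * m₁ ! * m₂ !) * (1 - q) ^ (n - m₁ - m₂)
      ≤ (n : ℝ) ^ (m₁ + m₂) * exp (-(q * (n - m₁ - m₂ : ℕ))) :=
        mul_le_mul (factorial_div_factorial_mul_factorial_le_pow h)
          (one_sub_pow_le_exp_neg_mul hq _) (pow_nonneg (by linarith) _) (by positivity)
    _ = exp ((m₁ + m₂) * log n - q * (n - (m₁ + m₂))) := by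
      rw [← exp_log (by positivity : (0 : ℝ) < (n : ℝ) ^ (m₁ + m₂)), ← exp_add, log_pow, hcast]
      push_cast
      ring_nf

lemma add_le_mul_of_add_div_le {x y t a : ℝ} (hx : 0 ≤ x) (ht : 1 ≤ t) (h : x + y / t ≤ a) :
    x + y ≤ t * a :=
  calc x + y ≤ t * x + y := by gcongr; exact le_mul_of_one_le_left hx ht
    _ = t * (x + y / t) := by field_simp
    _ ≤ t * a := by gcongr

lemma rpow_logb_one_div {c x : ℝ} (hc0 : 0 < c) (hc1 : c ≠ 1) (hx : 0 < x) :
    c ^ logb (1 / c) x = x⁻¹ := by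
  rw [← inv_inv (c ^ _), ← inv_rpow hc0.le, ← one_div c,
    rpow_logb (by positivity) (by simpa [eq_comm] using hc1) hx]

section apn

variable {p : ℝ} {n : ℕ}

lemma apn_eq_sub (hn : 0 < n) (hL : 0 < Lp p n * log n) :
    apn p n = Lp p n - Lp p (Lp p n * log n) :=
  logb_div (by positivity) hL.ne'

lemma one_sub_rpow_apn (hp : p ∈ Set.Ioo 0 1) (hn : 0 < n) (hL : 0 < Lp p n * log n) :
    (1 - p) ^ apn p n = Lp p n * log n / n := by
  unfold apn Lp at *
  rw [rpow_logb_one_div (by linarith [hp.2]) (by linarith [hp.1])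
    (div_pos (by positivity) hL), inv_div]

lemma mul_lt_one_sub_pow_mul_of_rpow_apn_sub_lt (hp : p ∈ Set.Ioo 0 1) (hn : 0 < n)
    (hL : 0 < Lp p n * log n) {t : ℝ} (ht : 0 < t) {m : ℕ}
    (h : (1 - p) ^ (apn p n - m) < 1 / t) :
    t * (Lp p n * log n) < (1 - p) ^ m * n := by
  rw [rpow_sub (by linarith [hp.2]), one_sub_rpow_apn hp hn hL, rpow_natCast, div_div,
    div_lt_div_iff₀ (by have := hp.2; positivity) ht] at h
  linarith

end apn

theorem stmt_12_general (p : ℝ) (hp : p ∈ Set.Ioo (0 : ℝ) 1) (t : ℕ) (ht : 2 ≤ t)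
    (n : ℕ) (hn : 2 ≤ n) (htn : (t : ℝ) * apn p n ≤ n)
    (hL : 1 < Lp p n * Real.log n)
    (m₁ m₂ : ℕ)
    (hhigh : (m₁ : ℝ) + (m₂ : ℝ) / t ≤ apn p n)
    (hm₁ : (1 - p) ^ (apn p n - (m₁ : ℝ)) < 1 / (t : ℝ)) :
    (n.factorial : ℝ) / ((n - m₁ - m₂).factorial * m₁.factorial * m₂.factorial) *
        (1 - (1 - p) ^ m₁) ^ (n - m₁ - m₂) <
      Real.exp ((t : ℝ) * (2 * Lp p n - Lp p (Lp p n * Real.log n) * Real.log n)) := by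
  set Λ := Lp p n
  set ℓ := Real.log n
  set q := (1 - p) ^ m₁
  have hn0 : 0 < n := by omega
  obtain ⟨hp0, hp1⟩ := hp
  have hb : 1 < 1 / (1 - p) := one_lt_one_div (by linarith) (by linarith)
  have hℓ : 0 < ℓ := log_pos (by exact_mod_cast hn)
  have hΛ : 0 < Λ := logb_pos hb (by exact_mod_cast hn)
  have hLΛℓ : 0 < Lp p (Λ * ℓ) := logb_pos hb hL
  have hA : apn p n = Λ - Lp p (Λ * ℓ) := apn_eq_sub hn0 (by linarith)
  have ht0 : (0 : ℝ) < t := by positivity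
  have hq : t * (Λ * ℓ) < q * n :=
    mul_lt_one_sub_pow_mul_of_rpow_apn_sub_lt ⟨hp0, hp1⟩ hn0 (by linarith) ht0 hm₁
  have hq1 : q ≤ 1 := pow_le_one₀ (by linarith) (by linarith)
  have hk : (m₁ + m₂ : ℝ) ≤ t * apn p n :=
    add_le_mul_of_add_div_le (by positivity) (by exact_mod_cast (by omega : 1 ≤ t)) hhigh
  refine (factorial_div_mul_one_sub_pow_le_exp hn0 (by exact_mod_cast hk.trans htn) hq1).trans_lt
    (exp_lt_exp.mpr ?_)
  have hAΛ : t * apn p n < t * Λ := mul_lt_mul_of_pos_left (by linarith) ht0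
  have hqk : q * (m₁ + m₂) ≤ m₁ + m₂ := mul_le_of_le_one_left (by positivity) hq1
  have hkℓ := mul_le_mul_of_nonneg_right hk hℓ.le
  rw [show Lp p (Λ * ℓ) = Λ - apn p n by linarith]
  calc (m₁ + m₂ : ℝ) * ℓ - q * (n - (m₁ + m₂))
      = (m₁ + m₂) * ℓ - q * n + q * (m₁ + m₂) := by ring
    _ < t * apn p n * ℓ - t * (Λ * ℓ) + t * Λ := by linarith
    _ ≤ t * (2 * Λ - (Λ - apn p n) * ℓ) := by linarith [mul_pos ht0 hΛ]

theorem stmt_12 (p : ℝ) (hp : p ∈ Set.Ioo (0 : ℝ) 1) (t : ℕ) (ht : 2 ≤ t)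
    (n : ℕ) (hn : 2 ≤ n) (ha : 1 ≤ apn p n) (htn : (t : ℝ) * apn p n ≤ n)
    (hL : 1 < Lp p n * Real.log n)
    (m₁ m₂ : ℕ) (hlow : apn p n - 1 < (m₁ : ℝ) + (m₂ : ℝ) / t)
    (hhigh : (m₁ : ℝ) + (m₂ : ℝ) / t ≤ apn p n)
    (hm₁ : (1 - p) ^ (apn p n - (m₁ : ℝ)) < 1 / (t : ℝ)) :
    (n.factorial : ℝ) / ((n - m₁ - m₂).factorial * m₁.factorial * m₂.factorial) *
        (1 - (1 - p) ^ m₁) ^ (n - m₁ - m₂) <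
      Real.exp ((t : ℝ) * (2 * Lp p n - Lp p (Lp p n * Real.log n) * Real.log n)) :=
  stmt_12_general p hp t ht n hn htn hL m₁ m₂ hhigh hm₁
end

section
/- Let s and t be integers with 2 ≤ s ≤ t−1, let G be a finite simple graph, let b be an integer, and let i be an integer with t−s+1 ≤ i ≤ t−1. If γ^{s/t}(G) = b − i/t, then γ^{1/t}(G) < b − 1. -/
/-!
Take a minimum `s/t`-SDF `f` with `a` vertices of value `1` and `k` of value `s/t`. Its weight
gives `a t + k s = b t - i`, so `t ∣ k s + i`; the bounds on `i` rule out `k = 0` and `k = 1`.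
Lowering the value `s/t` to `1/t` keeps `f` self dominating (since `s/t < 1`, a vertex dominated
by a neighbour is dominated by a neighbour of value `1`) and produces the weight
`a + k/t = b - 1 - (k (s - 1) - (t - i)) / t`, which is below `b - 1` because
`t - i ≤ s - 1 < k (s - 1)`.
-/

open Filter

/-- A `c`-self dominating function of `G` with values in `{0, 1, c}`. -/
def SimpleGraph.IsSDF {V : Type*} (G : SimpleGraph V) (c : ℝ) (f : V → ℝ) : Prop :=
  (∀ u, f u = 0 ∨ f u = 1 ∨ f u = c) ∧
  (∀ u, c ≤ f u ∨ ∃ v, G.Adj u v ∧ 1 ≤ f v)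

/-- The `c`-self domination number of `G`. -/
noncomputable def SimpleGraph.selfDom {V : Type*} [Fintype V] (G : SimpleGraph V) (c : ℝ) : ℝ :=
  sInf {w : ℝ | ∃ f : V → ℝ, G.IsSDF c f ∧ w = ∑ u, f u}

open Finset

namespace SimpleGraph

variable {V : Type*} (G : SimpleGraph V) {c : ℝ} {f : V → ℝ}

lemma finite_setOf_isSDF [Finite V] (c : ℝ) : {f : V → ℝ | G.IsSDF c f}.Finite :=
  (Set.Finite.pi' fun _ => (({0, 1, c} : Set ℝ).toFinite)).subset fun _ hf u => hf.1 u

section Fintype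

variable [Fintype V]

lemma finite_sdfWeights (c : ℝ) :
    {w : ℝ | ∃ f : V → ℝ, G.IsSDF c f ∧ w = ∑ u, f u}.Finite :=
  ((G.finite_setOf_isSDF c).image fun f => ∑ u, f u).subset fun _ ⟨f, hf, hw⟩ => ⟨f, hf, hw.symm⟩

lemma exists_isSDF_selfDom_eq (c : ℝ) : ∃ f : V → ℝ, G.IsSDF c f ∧ G.selfDom c = ∑ u, f u :=
  Set.Nonempty.csInf_mem (s := {w : ℝ | ∃ f : V → ℝ, G.IsSDF c f ∧ w = ∑ u, f u})
    ⟨_, fun _ => c, ⟨fun _ => .inr (.inr rfl), fun _ => .inl le_rfl⟩, rfl⟩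
    (G.finite_sdfWeights c)

lemma selfDom_le_sum (hf : G.IsSDF c f) : G.selfDom c ≤ ∑ u, f u :=
  csInf_le (G.finite_sdfWeights c).bddBelow ⟨f, hf, rfl⟩

end Fintype

namespace IsSDF

variable {G}

lemma isSDF_ite (hf : G.IsSDF c f) (hc₀ : 0 < c) (hc₁ : c < 1) {d : ℝ} (hd : d ≤ 1) :
    G.IsSDF d fun u => if f u = c then d else f u := by
  have h1c : (1 : ℝ) ≠ c := hc₁.ne'
  refine ⟨fun u => ?_, fun u => ?_⟩ <;> dsimp only
  · rcases hf.1 u with h | h | h <;> simp [h, hc₀.ne, h1c]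
  · rcases hf.2 u with h | ⟨v, huv, hv⟩
    · left
      rcases hf.1 u with h' | h' | h' <;> rw [h'] at h ⊢
      · exact absurd h hc₀.not_ge
      · simpa [h1c] using hd
      · simp
    · right
      have hv1 : f v = 1 := by rcases hf.1 v with h' | h' | h' <;> rw [h'] at hv ⊢ <;> linarith
      exact ⟨v, huv, by simp [hv1, h1c]⟩

lemma sum_ite_eq [Fintype V] (hf : G.IsSDF c f) (hc₁ : c ≠ 1) (x : ℝ) :
    ∑ u, (if f u = c then x else f u) = #{u | f u = 1} + #{u | f u = c} * x := by
  have hsplit : ∀ u, (if f u = c then x else f u) =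
      (if f u = 1 then 1 else 0) + (if f u = c then x else 0) := by
    intro u
    rcases hf.1 u with h | h | h <;> rw [h] <;> simp [hc₁, Ne.symm hc₁]
  simp only [hsplit, sum_add_distrib, ← sum_filter, sum_const, nsmul_eq_mul, mul_one]

lemma sum_eq [Fintype V] (hf : G.IsSDF c f) (hc₁ : c ≠ 1) :
    ∑ u, f u = #{u | f u = 1} + #{u | f u = c} * c := by
  rw [← hf.sum_ite_eq hc₁]
  exact sum_congr rfl fun u _ => by split_ifs with h <;> simp [h]

end IsSDF

end SimpleGraph

lemma two_le_of_dvd_mul_add {k s t i : ℕ} (h : t ∣ k * s + i) (hi₀ : 0 < i) (hit : i < t)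
    (hsi₁ : t < s + i) (hsi₂ : s + i < 2 * t) : 2 ≤ k := by
  by_contra! hk
  interval_cases k
  · rw [zero_mul, zero_add] at h
    exact hi₀.ne' (Nat.eq_zero_of_dvd_of_lt h hit)
  · rw [one_mul] at h
    have := Nat.eq_zero_of_dvd_of_lt (Nat.dvd_sub h dvd_rfl) (by omega : s + i - t < t)
    omega

theorem stmt_15 {V : Type*} [Fintype V] (G : SimpleGraph V) (s t : ℕ)
    (hs : 2 ≤ s) (hst : s ≤ t - 1) (b : ℤ) (i : ℕ)
    (hi₁ : t - s + 1 ≤ i) (hi₂ : i ≤ t - 1)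
    (hγ : G.selfDom ((s : ℝ) / t) = (b : ℝ) - (i : ℝ) / t) :
    G.selfDom ((1 : ℝ) / t) < (b : ℝ) - 1 := by
  have ht : (0 : ℝ) < t := by exact_mod_cast (by omega : 0 < t)
  have hc₀ : (0 : ℝ) < s / t := by positivity
  have hc₁ : (s : ℝ) / t < 1 := (div_lt_one ht).2 (by exact_mod_cast (by omega : s < t))
  obtain ⟨f, hf, hfγ⟩ := G.exists_isSDF_selfDom_eq ((s : ℝ) / t)
  set a := #{u | f u = 1}
  set k := #{u | f u = s / t}
  have hweight : (a : ℤ) * t + k * s = b * t - i := by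
    have h : (b : ℝ) - i / t = a + k * (s / t) := hγ.symm.trans (hfγ.trans (hf.sum_eq hc₁.ne))
    field_simp at h
    exact_mod_cast (by linarith : (a : ℝ) * t + k * s = b * t - i)
  have hdvd : t ∣ k * s + i := Int.natCast_dvd_natCast.1 ⟨b - a, by push_cast; linarith⟩
  have hk : 2 ≤ k := two_le_of_dvd_mul_add hdvd (by omega) (by omega) (by omega) (by omega)
  have hlt : (a : ℤ) * t + k < (b - 1) * t := by
    linarith [mul_le_mul_of_nonneg_right (by exact_mod_cast hk : (2 : ℤ) ≤ k)
      (by omega : (0 : ℤ) ≤ s - 1), (by omega : (t : ℤ) + 1 ≤ s + i)]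
  calc G.selfDom (1 / t) ≤ ∑ u, if f u = s / t then 1 / (t : ℝ) else f u :=
        G.selfDom_le_sum (hf.isSDF_ite hc₀ hc₁ (div_le_one_of_le₀ (by exact_mod_cast (by omega))
          ht.le))
    _ = a + k * (1 / t) := hf.sum_ite_eq hc₁.ne _
    _ < b - 1 := by
      rw [mul_one_div, add_div' _ _ _ ht.ne', div_lt_iff₀ ht]
      exact_mod_cast hlt
end

section
/- Let p ∈ (0,1) and let t be a positive integer. Then with probability tending to 1 as n → ∞, the (1/t)-self domination number of the Erdős–Rényi random graph G(n,p) satisfies γ^{1/t}(G(n,p)) > a_p(n). -/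
open Filter

open scoped Classical in
/-- The probability of the event `E` under the Erdős–Rényi measure `μ_{n,p}`. -/
noncomputable def erProb (n : ℕ) (p : ℝ) (E : Set (SimpleGraph (Fin n))) : ℝ :=
  ∑ G : SimpleGraph (Fin n),
    if G ∈ E then p ^ (Nat.card G.edgeSet) * (1 - p) ^ (n.choose 2 - Nat.card G.edgeSet) else 0

/-!
If `γ^c(G) ≤ a` for `c = 1/t`, an optimal `c`-SDF `f` yields disjoint vertex sets
`A = f⁻¹[1, ∞)` and `B = f⁻¹{c} \ A` with `|A| + c|B| ≤ a` such that every vertex outside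
`A ∪ B` has a neighbour in `A`. For fixed `A`, `B` the edges between `A` and the remaining
`n - |A| - |B|` vertices are independent, so this happens with probability
`(1 - (1-p)^|A|)^(n-|A|-|B|)`. Since `(1-p)^{a_p(n)} = L(n) ln n / n`, each such term is at most
`n^{-(|A|+|B|+3)}` for large `n`, and the union bound over all pairs `(A, B)` gives `O(n⁻³)`.
-/

open MeasureTheory ProbabilityTheory unitInterval Finset
open scoped SimpleGraph

instance SimpleGraph.instMeasurableSingletonClass {V : Type*} [Countable V] :
    MeasurableSingletonClass (SimpleGraph V) where
  measurableSet_singleton G := by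
    convert (measurableSet_singleton G.Adj).preimage SimpleGraph.measurable_adj
    ext H
    simp [SimpleGraph.adj_inj, eq_comm]

lemma MeasureTheory.Measure.infinitePi_map_comp_injective {ι β X : Type*} [MeasurableSpace X]
    (μ : ι → Measure X) [∀ i, IsProbabilityMeasure (μ i)] {e : β → ι} (he : e.Injective) :
    (infinitePi μ).map (fun x => x ∘ e) = infinitePi fun b => μ (e b) := by
  classical
  refine eq_infinitePi _ fun s t ht => ?_
  have hpre : (fun x : ι → X => x ∘ e) ⁻¹' (s : Set β).pi t =
      (s.map ⟨e, he⟩ : Set ι).pi (Function.extend e t fun _ => Set.univ) := by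
    ext x
    simp [he.extend_apply]
  rw [map_apply (by fun_prop) (.pi s.countable_toSet fun b _ => ht b), hpre,
    infinitePi_pi _ ?_, prod_map]
  · simp [he.extend_apply]
  · intro i hi
    obtain ⟨b, -, rfl⟩ := Finset.mem_map.1 hi
    simpa [he.extend_apply] using ht b

lemma MeasureTheory.Measure.infinitePi_setOf_exists {A : Type*} [Fintype A]
    (μ : A → Measure Prop) [∀ a, IsProbabilityMeasure (μ a)] :
    infinitePi μ {h | ∃ a, h a} = 1 - ∏ a, μ a {False} := by
  have : {h : A → Prop | ∃ a, h a} = {fun _ => False}ᶜ := by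
    ext h
    simp [funext_iff]
  rw [this, prob_compl_eq_one_sub (measurableSet_singleton _), infinitePi_singleton_of_fintype]

lemma erProb_eq_binomialRandom (n : ℕ) (p : I) (E : Set (SimpleGraph (Fin n))) :
    erProb n p E = G(Fin n, p).real E := by
  classical
  have hE : E = ↑(univ.filter (· ∈ E)) := by ext; simp
  rw [erProb, ← sum_filter]
  conv_rhs => rw [hE, ← sum_measureReal_singleton]
  refine sum_congr rfl fun G _ => ?_
  rw [measureReal_def, SimpleGraph.binomialRandom_singleton, Nat.card_coe_set_eq, Nat.card_fin]
  simp [coe_symm_eq]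

namespace SimpleGraph

variable {V : Type*}

lemma sym2_mk_injective_of_disjoint {W A : Finset V} (hWA : Disjoint W A) :
    (fun q : W × A => s(q.1.1, q.2.1)).Injective := by
  rintro ⟨⟨u, hu⟩, ⟨a, ha⟩⟩ ⟨⟨u', hu'⟩, ⟨a', ha'⟩⟩ h
  rcases Sym2.eq_iff.1 h with ⟨rfl, rfl⟩ | ⟨rfl, -⟩
  · rfl
  · exact (Finset.disjoint_left.1 hWA hu ha').elim

lemma binomialRandom_forall_exists_adj_le [Countable V] (p : I) {W A : Finset V}
    (hWA : Disjoint W A) :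
    G(V, p) {G | ∀ u ∈ W, ∃ a ∈ A, G.Adj u a} ≤ (1 - toNNReal (σ p) ^ #A) ^ #W := by
  set e : W × A → Sym2 V := fun q => s(q.1.1, q.2.1)
  set μ : Sym2 V → Measure Prop := fun e => Ber(¬ e.IsDiag, False, p)
  have hμ : ∀ u : W, ∀ a : A, μ (e (u, a)) {False} = toNNReal (σ p) := fun u a =>
    bernoulliMeasure_apply_of_notMem_of_mem p (measurableSet_singleton _)
      (by simpa [e] using (Finset.disjoint_coe.2 hWA).ne_of_mem u.2 a.2) rfl
  set Φ := MeasurableEquiv.curry W A Prop ∘ fun x : Sym2 V → Prop => x ∘ e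
  have hΦ : Measurable Φ := by unfold Φ; fun_prop
  have hsub : (fun G e => e ∈ G.edgeSet) '' {G : SimpleGraph V | ∀ u ∈ W, ∃ a ∈ A, G.Adj u a} ⊆
      Φ ⁻¹' Set.univ.pi fun _ => {h | ∃ a, h a} := by
    rintro _ ⟨G, hG, rfl⟩ u -
    obtain ⟨a, ha, hadj⟩ := hG u u.2
    exact ⟨⟨a, ha⟩, hadj⟩
  have hfactor : ∀ u : W, Measure.infinitePi (fun a : A => μ (e (u, a))) {h | ∃ a, h a} =
      1 - toNNReal (σ p) ^ #A := fun u => by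
    rw [Measure.infinitePi_setOf_exists, Finset.prod_congr rfl fun a _ => hμ u a, prod_const,
      card_univ, Fintype.card_coe]
  rw [binomialRandom_apply]
  -- The coordinates `s(u, a)` are distinct since `W ∩ A = ∅`, so reading them off pushes the
  -- product measure forward to a product measure on `W → A → Prop`.
  calc _ ≤ Measure.infinitePi μ (Φ ⁻¹' Set.univ.pi fun _ => {h | ∃ a, h a}) := measure_mono hsub
    _ = _ := by
      rw [← Measure.map_apply hΦ (.of_discrete), ← Measure.map_map (by fun_prop) (by fun_prop),
        Measure.infinitePi_map_comp_injective _ (sym2_mk_injective_of_disjoint hWA),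
        show (fun b : W × A => μ (e b)) = fun q => μ (e (q.1, q.2)) from rfl,
        Measure.infinitePi_map_curry (fun u a => μ (e (u, a))), Measure.infinitePi_eq_pi,
        Measure.pi_pi, Finset.prod_congr rfl fun u _ => hfactor u, prod_const, card_univ,
        Fintype.card_coe]

lemma binomialRandom_real_forall_exists_adj_le [Countable V] (p : I) {W A : Finset V}
    (hWA : Disjoint W A) :
    G(V, p).real {G | ∀ u ∈ W, ∃ a ∈ A, G.Adj u a} ≤ (1 - (1 - (p : ℝ)) ^ #A) ^ #W := by
  have hσ : (toNNReal (σ p) : ENNReal) ^ #A ≤ 1 :=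
    pow_le_one₀ (by simp) (by exact_mod_cast (σ p).2.2)
  calc _ ≤ ((1 - (toNNReal (σ p) : ENNReal) ^ #A) ^ #W).toReal :=
        ENNReal.toReal_mono (by simp) (binomialRandom_forall_exists_adj_le p hWA)
    _ = _ := by
      rw [ENNReal.toReal_pow, ENNReal.toReal_sub_of_le hσ (by simp)]
      simp [coe_symm_eq]

variable [Fintype V] {G : SimpleGraph V} {c : ℝ}

lemma exists_isSDF_sum_eq_selfDom (G : SimpleGraph V) (c : ℝ) :
    ∃ f, G.IsSDF c f ∧ ∑ u, f u = G.selfDom c := by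
  have hne : {w : ℝ | ∃ f : V → ℝ, G.IsSDF c f ∧ w = ∑ u, f u}.Nonempty :=
    ⟨_, fun _ => c, ⟨fun _ => by simp, fun _ => Or.inl le_rfl⟩, rfl⟩
  have hfin : {w : ℝ | ∃ f : V → ℝ, G.IsSDF c f ∧ w = ∑ u, f u}.Finite := by
    refine ((Set.Finite.pi fun _ => Set.toFinite {0, 1, c}).image
      fun f : V → ℝ => ∑ u, f u).subset ?_
    rintro _ ⟨f, hf, rfl⟩
    exact ⟨f, fun u _ => by simpa using hf.1 u, rfl⟩
  obtain ⟨f, hf, hsum⟩ := hne.csInf_mem hfin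
  exact ⟨f, hf, hsum.symm⟩

lemma IsSDF.exists_dominating_pair [DecidableEq V] (hc : 0 < c) {f : V → ℝ}
    (hf : G.IsSDF c f) :
    ∃ A B : Finset V, Disjoint A B ∧ (#A : ℝ) + c * #B ≤ ∑ u, f u ∧
      ∀ u ∈ (A ∪ B)ᶜ, ∃ v ∈ A, G.Adj u v := by
  set A := univ.filter fun u => 1 ≤ f u
  set B := univ.filter fun u => f u = c ∧ f u < 1
  have hdisj : Disjoint A B := disjoint_filter.2 fun u _ h1 h2 => h2.2.not_ge h1
  refine ⟨A, B, hdisj, ?_, fun u hu => ?_⟩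
  · have key : ∀ u, (if u ∈ A then 1 else 0) + (if u ∈ B then c else 0) ≤ f u := by
      intro u
      by_cases huA : u ∈ A
      · rw [if_pos huA, if_neg (Finset.disjoint_left.1 hdisj huA)]
        simpa [A] using huA
      by_cases huB : u ∈ B
      · rw [if_neg huA, if_pos huB, zero_add]
        exact (mem_filter.1 huB).2.1.ge
      · rw [if_neg huA, if_neg huB, add_zero]
        rcases hf.1 u with h | h | h <;> rw [h] <;> linarith
    calc (#A : ℝ) + c * #B = ∑ u, ((if u ∈ A then 1 else 0) + (if u ∈ B then c else 0)) := by
          simp [sum_add_distrib, mul_comm]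
      _ ≤ ∑ u, f u := sum_le_sum fun u _ => key u
  · simp only [mem_compl, mem_union, not_or, A, B, mem_filter, mem_univ, true_and, not_le,
      not_and] at hu
    have hu0 : f u = 0 := by
      rcases hf.1 u with h | h | h
      · exact h
      · exact absurd h hu.1.ne
      · exact absurd hu.1 (hu.2 h)
    obtain h | ⟨v, huv, hv⟩ := hf.2 u
    · linarith
    · exact ⟨v, by simpa [A] using hv, huv⟩

lemma binomialRandom_real_selfDom_le_le_sum [DecidableEq V] (p : I) (hc : 0 < c) (a : ℝ) :
    G(V, p).real {G | G.selfDom c ≤ a} ≤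
      ∑ AB ∈ univ.filter (fun AB : Finset V × Finset V =>
          Disjoint AB.1 AB.2 ∧ (#AB.1 : ℝ) + c * #AB.2 ≤ a),
        (1 - (1 - (p : ℝ)) ^ #AB.1) ^ #(AB.1 ∪ AB.2)ᶜ := by
  set P := univ.filter fun AB : Finset V × Finset V =>
    Disjoint AB.1 AB.2 ∧ (#AB.1 : ℝ) + c * #AB.2 ≤ a
  calc _ ≤ G(V, p).real (⋃ AB ∈ P, {G | ∀ u ∈ (AB.1 ∪ AB.2)ᶜ, ∃ v ∈ AB.1, G.Adj u v}) := by
        refine measureReal_mono (fun G hG => ?_) (measure_ne_top _ _)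
        obtain ⟨f, hf, hsum⟩ := G.exists_isSDF_sum_eq_selfDom c
        obtain ⟨A, B, hAB, hw, hdom⟩ := hf.exists_dominating_pair hc
        have hGa : G.selfDom c ≤ a := hG
        have hmem : (A, B) ∈ P := mem_filter.2 ⟨mem_univ _, hAB, by linarith⟩
        exact Set.mem_biUnion (mem_coe.2 hmem) hdom
    _ ≤ ∑ AB ∈ P, G(V, p).real {G | ∀ u ∈ (AB.1 ∪ AB.2)ᶜ, ∃ v ∈ AB.1, G.Adj u v} :=
        measureReal_biUnion_finset_le _ _
    _ ≤ _ := sum_le_sum fun AB _ => binomialRandom_real_forall_exists_adj_le p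
        (disjoint_compl_left_iff.2 subset_union_left)

end SimpleGraph

section Asymptotics

open Real

lemma sub_le_sub_mul_exp {l t n M a x y : ℝ} (hl : 0 ≤ l) (ht : 0 < t) (hM : 0 < M)
    (ha : exp (l * a) = n / M) (han : (1 + t) * a ≤ n) (hx : 0 ≤ x) (hy : 0 ≤ y)
    (hxy : x + y / t ≤ a) :
    M * exp (l * (y / t)) - (1 + t) * a ≤ (n - x - y) * exp (-l * x) := by
  have hn : 0 < n := by simpa [hM] using ha.symm.trans_gt (exp_pos _)
  have hxa : x ≤ a := by linarith [div_nonneg hy ht.le]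
  have hya : y ≤ t * a := by
    rw [← div_le_iff₀' ht]
    linarith
  set E := exp (l * (y / t))
  have hE_le : M / n * E ≤ 1 := by
    calc M / n * E ≤ M / n * exp (l * a) := by
          have : y / t ≤ a := by linarith
          exact mul_le_mul_of_nonneg_left (exp_le_exp.2 (by gcongr)) (by positivity)
      _ = 1 := by rw [ha]; field_simp
  have hE_exp : M / n * E ≤ exp (-l * x) := by
    rw [show M / n = exp (-(l * a)) by rw [exp_neg, ha, inv_div], ← exp_add]
    exact exp_le_exp.2 (by nlinarith [mul_le_mul_of_nonneg_left hxy hl])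
  calc M * E - (1 + t) * a ≤ M * E - (1 + t) * a * (M / n * E) := by
        have : (1 + t) * a * (M / n * E) ≤ (1 + t) * a := by
          nlinarith [mul_nonneg (by linarith : (0 : ℝ) ≤ 1 + t) (hx.trans hxa)]
        linarith
    _ = (n - (1 + t) * a) * (M / n * E) := by field_simp
    _ ≤ (n - x - y) * exp (-l * x) :=
        mul_le_mul (by nlinarith) hE_exp (by positivity) (by nlinarith)

lemma add_mul_log_le_sub_mul_exp {l t n x y : ℝ} (hl : 0 < l) (ht : 0 < t)
    (htn : t ≤ log n) (hn : (1 + t) * (log n / l) ≤ n)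
    (hM : 3 * l + 1 + t ≤ log (log n ^ 2 / l)) (hx : 0 ≤ x) (hy : 0 ≤ y)
    (hxy : x + y / t ≤ (log n - log (log n ^ 2 / l)) / l) :
    (x + y + 3) * log n ≤ (n - x - y) * exp (-l * x) := by
  set L := log n
  set M := L ^ 2 / l
  set a := (L - log M) / l
  have hL : 0 < L := ht.trans_le htn
  have hn0 : 0 < n := lt_of_lt_of_le (by positivity) hn
  have hM0 : 0 < M := by positivity
  have hexp_a : exp (l * a) = n / M := by
    rw [show l * a = L - log M by simp only [a]; field_simp, exp_sub, exp_log hM0, exp_log hn0]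
  have haL : a ≤ L / l := div_le_div_of_nonneg_right (by linarith) hl.le
  have hlower := sub_le_sub_mul_exp hl.le ht hM0 hexp_a (le_trans (by gcongr) hn) hx hy hxy
  have hE : M * (1 + l * (y / t)) ≤ M * exp (l * (y / t)) := by
    gcongr
    linarith [add_one_le_exp (l * (y / t))]
  have hLy : L * y ≤ M * (l * (y / t)) := by
    rw [show M * (l * (y / t)) = L * (L * y / t) by simp only [M]; field_simp]
    gcongr
    rw [le_div_iff₀ ht]
    nlinarith
  have hlogM : 3 * L + (1 + t) * (L / l) ≤ L / l * log M := by
    have := mul_le_mul_of_nonneg_left hM (div_pos hL hl).le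
    have h3 : L / l * (3 * l) = 3 * L := by field_simp
    linarith
  calc (x + y + 3) * L ≤ (a + y + 3) * L := by gcongr; linarith [div_nonneg hy ht.le]
    _ = M + L * y + 3 * L - L / l * log M := by simp only [a, M]; field_simp; ring
    _ ≤ M * exp (l * (y / t)) - (1 + t) * a := by nlinarith
    _ ≤ (n - x - y) * exp (-l * x) := hlower

lemma eventually_log_bounds {l : ℝ} (hl : 0 < l) (t : ℝ) :
    ∀ᶠ n : ℕ in atTop, t ≤ log n ∧ (1 + t) * (log n / l) ≤ n ∧
      3 * l + 1 + t ≤ log (log n ^ 2 / l) := by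
  have hlog : Tendsto (fun n : ℕ => log n) atTop atTop :=
    tendsto_log_atTop.comp tendsto_natCast_atTop_atTop
  have hsub : ∀ᶠ x : ℝ in atTop, (1 + t) * (log x / l) ≤ x := by
    filter_upwards [((isLittleO_log_id_atTop.const_mul_left ((1 + t) / l)).bound one_pos),
      eventually_ge_atTop 0] with x hx hx0
    rw [one_mul, id, norm_of_nonneg hx0] at hx
    calc (1 + t) * (log x / l) = (1 + t) / l * log x := by ring
      _ ≤ _ := (le_abs_self _).trans hx
  refine (hlog.eventually_ge_atTop t).and
    ((tendsto_natCast_atTop_atTop.eventually hsub).and ?_)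
  exact (tendsto_log_atTop.comp ((tendsto_pow_atTop two_ne_zero |>.comp hlog).atTop_div_const
    hl)).eventually_ge_atTop _

lemma apn_eq {p : ℝ} {n : ℕ} (hp : 0 < log (1 / (1 - p))) (hn : 0 < log n) :
    apn p n = (log n - log (log n ^ 2 / log (1 / (1 - p)))) / log (1 / (1 - p)) := by
  have hn0 : (n : ℝ) ≠ 0 := by rintro h; simp [h] at hn
  rw [apn, logb, logb,
    show log n / log (1 / (1 - p)) * log n = log n ^ 2 / log (1 / (1 - p)) by ring,
    log_div hn0 (by positivity)]

lemma eventually_add_mul_log_le_sub_mul_pow {p t : ℝ} (hp : p ∈ Set.Ioo 0 1) (ht : 0 < t) :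
    ∀ᶠ n : ℕ in atTop, ∀ s b : ℕ, (s : ℝ) + 1 / t * b ≤ apn p n →
      ((s : ℝ) + b + 3) * log n ≤ (n - s - b) * (1 - p) ^ s := by
  have hl : 0 < log (1 / (1 - p)) :=
    log_pos ((one_lt_div (by linarith [hp.2])).2 (by linarith [hp.1]))
  filter_upwards [eventually_log_bounds hl t] with n ⟨htn, hn, hM⟩ s b hsb
  have hpow : (1 - p) ^ s = exp (-log (1 / (1 - p)) * s) := by
    rw [one_div, log_inv, neg_neg, mul_comm, exp_nat_mul, exp_log (by linarith [hp.2])]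
  rw [hpow]
  refine add_mul_log_le_sub_mul_exp hl ht htn hn hM (Nat.cast_nonneg _) (Nat.cast_nonneg _) ?_
  rw [← apn_eq hl (ht.trans_le htn)]
  linarith [show (b : ℝ) / t = 1 / t * b by ring]

lemma one_sub_pow_le_inv_pow {q n : ℝ} {m K : ℕ} (hq : q ≤ 1) (hn : 0 < n)
    (h : K * log n ≤ m * q) : (1 - q) ^ m ≤ n⁻¹ ^ K := by
  calc (1 - q) ^ m ≤ exp (-q) ^ m :=
        pow_le_pow_left₀ (by linarith) (by linarith [add_one_le_exp (-q)]) m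
    _ = exp (-(m * q)) := by rw [← exp_nat_mul]; ring_nf
    _ ≤ exp (K * log n⁻¹) := by rw [log_inv]; exact exp_le_exp.2 (by linarith)
    _ = n⁻¹ ^ K := by rw [exp_nat_mul, exp_log (inv_pos.2 hn)]

lemma sum_inv_pow_card_add_card_le (n : ℕ) :
    ∑ AB : Finset (Fin n) × Finset (Fin n), (n : ℝ)⁻¹ ^ (#AB.1 + #AB.2) ≤ exp 2 := by
  have hsum : ∑ A : Finset (Fin n), (n : ℝ)⁻¹ ^ #A = ((n : ℝ)⁻¹ + 1) ^ n := by
    simpa using Fin.sum_pow_mul_eq_add_pow (n := n) (n : ℝ)⁻¹ 1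
  have hexp : ((n : ℝ)⁻¹ + 1) ^ n ≤ exp 1 :=
    calc ((n : ℝ)⁻¹ + 1) ^ n ≤ exp (n : ℝ)⁻¹ ^ n := by gcongr; exact add_one_le_exp _
      _ = exp ((n : ℝ) * (n : ℝ)⁻¹) := by rw [exp_nat_mul]
      _ ≤ exp 1 := exp_le_exp.2 mul_inv_le_one
  calc ∑ AB : Finset (Fin n) × Finset (Fin n), (n : ℝ)⁻¹ ^ (#AB.1 + #AB.2)
      = (((n : ℝ)⁻¹ + 1) ^ n) ^ 2 := by
        rw [Fintype.sum_prod_type, sq, ← hsum, sum_mul_sum]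
        simp_rw [pow_add]
    _ ≤ exp 1 ^ 2 := by gcongr
    _ = exp 2 := by rw [← exp_nat_mul]; norm_num

end Asymptotics

lemma eventually_binomialRandom_real_selfDom_le_apn_le {p t : ℝ} (hp : p ∈ Set.Ioo 0 1)
    (ht : 0 < t) :
    ∀ᶠ n : ℕ in atTop, G(Fin n, ⟨p, hp.1.le, hp.2.le⟩).real {G | G.selfDom (1 / t) ≤ apn p n} ≤
      Real.exp 2 * (n : ℝ)⁻¹ ^ 3 := by
  filter_upwards [eventually_add_mul_log_le_sub_mul_pow hp ht, eventually_gt_atTop 0]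
    with n hbound hn
  have hterm : ∀ AB : Finset (Fin n) × Finset (Fin n), Disjoint AB.1 AB.2 →
      (#AB.1 : ℝ) + 1 / t * #AB.2 ≤ apn p n →
      (1 - (1 - p) ^ #AB.1) ^ #(AB.1 ∪ AB.2)ᶜ ≤ (n : ℝ)⁻¹ ^ (#AB.1 + #AB.2) * (n : ℝ)⁻¹ ^ 3 := by
    rintro ⟨A, B⟩ hAB hw
    have hW : (#(A ∪ B)ᶜ : ℝ) = n - #A - #B := by
      rw [card_compl, Fintype.card_fin, card_union_of_disjoint hAB,
        Nat.cast_sub (by simpa [card_union_of_disjoint hAB] using card_le_univ (A ∪ B))]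
      push_cast
      ring
    rw [← pow_add]
    refine one_sub_pow_le_inv_pow (pow_le_one₀ (by linarith [hp.2]) (by linarith [hp.1]))
      (by positivity) ?_
    push_cast
    rw [hW]
    exact hbound _ _ hw
  calc _ ≤ _ := SimpleGraph.binomialRandom_real_selfDom_le_le_sum _ (by positivity) _
    _ ≤ ∑ AB ∈ univ.filter (fun AB : Finset (Fin n) × Finset (Fin n) =>
          Disjoint AB.1 AB.2 ∧ (#AB.1 : ℝ) + 1 / t * #AB.2 ≤ apn p n),
        (n : ℝ)⁻¹ ^ (#AB.1 + #AB.2) * (n : ℝ)⁻¹ ^ 3 :=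
        sum_le_sum fun AB hAB => hterm AB (mem_filter.1 hAB).2.1 (mem_filter.1 hAB).2.2
    _ ≤ ∑ AB : Finset (Fin n) × Finset (Fin n), (n : ℝ)⁻¹ ^ (#AB.1 + #AB.2) * (n : ℝ)⁻¹ ^ 3 :=
        sum_le_sum_of_subset_of_nonneg (filter_subset _ _) fun _ _ _ => by positivity
    _ ≤ Real.exp 2 * (n : ℝ)⁻¹ ^ 3 := by
        rw [← sum_mul]
        gcongr
        exact sum_inv_pow_card_add_card_le n

theorem stmt_19 (p : ℝ) (hp : p ∈ Set.Ioo (0 : ℝ) 1) (t : ℕ) (ht : 1 ≤ t) :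
    Filter.Tendsto (fun n : ℕ =>
      erProb n p {G | apn p n < G.selfDom (1 / (t : ℝ))})
      Filter.atTop (nhds 1) := by
  have ht0 : (0 : ℝ) < t := by exact_mod_cast ht
  set q : I := ⟨p, hp.1.le, hp.2.le⟩
  have hcompl : ∀ n : ℕ, erProb n p {G | apn p n < G.selfDom (1 / (t : ℝ))} =
      1 - G(Fin n, q).real {G | G.selfDom (1 / t) ≤ apn p n} := by
    intro n
    rw [← probReal_compl_eq_one_sub (Set.toFinite _).measurableSet]
    exact (erProb_eq_binomialRandom n q _).trans (by congr 1; ext G; simp)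
  have hlim : Tendsto (fun n : ℕ => Real.exp 2 * (n : ℝ)⁻¹ ^ 3) atTop (nhds 0) := by
    simpa using ((tendsto_inv_atTop_zero.comp tendsto_natCast_atTop_atTop).pow 3).const_mul
      (Real.exp 2)
  have hbad := squeeze_zero' (.of_forall fun _ => measureReal_nonneg)
    (eventually_binomialRandom_real_selfDom_le_apn_le hp ht0) hlim
  simp_rw [hcompl]
  simpa using hbad.const_sub 1
end
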